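/- Let ρ be an n-ary relation on a set A and let θ be a partial action of a group G on A which preserves ρ, in the sense that if (a₁,…,aₙ) ∈ ρ and θ(x,a₁),…,θ(x,aₙ) are all defined, then (θ(x,a₁),…,θ(x,aₙ)) ∈ ρ. Define on A^U = (G×A)/∼ the relation ρ^U = {([x,a₁],…,[x,aₙ]) : (a₁,…,aₙ) ∈ ρ, x ∈ G}. Then (i) the global action θ^U preserves ρ^U, and (ii) ([1,a₁],…,[1,aₙ]) ∈ ρ^U implies (a₁,…,aₙ) ∈ ρ. -/
import Mathlib


universe u

def IsPartialAction {G A : Type u} [Group G] (θ : G → A → Option A) : Prop :=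
  (∀ a, θ 1 a = some a) ∧
  (∀ x a b, θ x a = some b → θ x⁻¹ b = some a) ∧
  (∀ x y a b c, θ y a = some b → θ x b = some c → θ (x * y) a = some c)

/-- The relation `(x,a) ∼ (y,b) ↔ θ(y⁻¹x, a) = b` on `G × A`. -/
def glueRel {G A : Type u} [Group G] (θ : G → A → Option A) : G × A → G × A → Prop :=
  fun p q => θ (q.1⁻¹ * p.1) p.2 = some q.2

lemma glueRel_equiv {G A : Type u} [Group G] (θ : G → A → Option A)
    (h : IsPartialAction θ) : Equivalence (glueRel θ) := by
  obtain ⟨h1, h2, h3⟩ := h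
  constructor
  · intro p
    unfold glueRel
    rw [inv_mul_cancel]
    exact h1 p.2
  · intro p q hpq
    have := h2 _ _ _ hpq
    unfold glueRel
    rwa [mul_inv_rev, inv_inv] at this
  · intro p q r hpq hqr
    have := h3 _ _ _ _ _ hpq hqr
    unfold glueRel
    rwa [mul_assoc, mul_inv_cancel_left] at this

/-- if the partial action `θ` preserves the `m`-ary relation `ρ`, then the
induced global action on `A^U` preserves
`ρ^U = {([x,a₁],…,[x,aₘ]) : ρ(a₁,…,aₘ), x ∈ G}`, and
`([1,a₁],…,[1,aₘ]) ∈ ρ^U` implies `ρ(a₁,…,aₘ)`. -/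
theorem stmt_5 {G A : Type u} [Group G] (θ : G → A → Option A)
    (h : IsPartialAction θ) {m : ℕ} (ρ : (Fin m → A) → Prop)
    (hpres : ∀ (x : G) (a b : Fin m → A),
      (∀ i, θ x (a i) = some (b i)) → ρ a → ρ b) :
    (∀ Θ : G → Quot (glueRel θ) → Quot (glueRel θ),
      (∀ (x y : G) (a : A),
        Θ x (Quot.mk (glueRel θ) (y, a)) = Quot.mk (glueRel θ) (x * y, a)) →
      ∀ (z : G) (c : Fin m → Quot (glueRel θ)),
        (∃ (x : G) (a : Fin m → A), ρ a ∧ ∀ i, c i = Quot.mk (glueRel θ) (x, a i)) →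
        (∃ (x : G) (a : Fin m → A), ρ a ∧ ∀ i, Θ z (c i) = Quot.mk (glueRel θ) (x, a i))) ∧
    (∀ a : Fin m → A,
      (∃ (x : G) (a' : Fin m → A), ρ a' ∧
        ∀ i, Quot.mk (glueRel θ) ((1 : G), a i) = Quot.mk (glueRel θ) (x, a' i)) → ρ a) := by
  constructor
  · rintro Θ hΘ z c ⟨x, a, hρ, hc⟩
    exact ⟨z * x, a, hρ, fun i => by rw [hc i, hΘ]⟩
  · rintro a ⟨x, a', hρ', heq⟩
    have key : ∀ i, glueRel θ ((1 : G), a i) (x, a' i) := fun i =>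
      ((glueRel_equiv θ h).eqvGen_iff).mp (Quot.eqvGen_exact (heq i))
    refine hpres x a' a (fun i => ?_) hρ'
    have k := key i
    unfold glueRel at k
    simp only [mul_one] at k
    simpa using h.2.1 _ _ _ k
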